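/- arXiv:0911.3179 — 2 statements merged into one kernel-verified Lean document; each statement's English description precedes it below -/
import Mathlib

section
/- Let H ≥ 0 be a self-adjoint operator and A self-adjoint with χ_I(H)(i/ℏ)[H,A]χ_I(H) ≥ c₀ℏ χ_I(H), where I ⊂ (0,∞) is compact. Then using the Kato square-root representation H^{-1/2}χ_I(H) = (1/π)∫_0^∞ (H+λ)^{-1} λ^{-1/2} dλ χ_I(H), one obtains χ_I(H)(i/ℏ)[√H, A]χ_I(H) ≥ c̃₀ℏ χ_I(H) for some c̃₀ > 0 depending only on c₀ and I. -/
/-!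
Write `S = √H` and `K = (i/ℏ)[S, A]`, so that `(i/ℏ)[H, A] = S K + K S`. Along the flow
`u t = e^{-tS} φ` of a vector `φ ∈ ran P` one has `d/dt ⟪K u, u⟫ = -⟪(S K + K S) u, u⟫` and
`d/dt ‖u‖² = -2 ⟪S u, u⟫`. On `ran P` the Mourre estimate and `S ≤ √M` give
`S K + K S ≥ 2κ S` with `κ = c₀ℏ / (2√M)`, so `⟪K u, u⟫ - κ ‖u‖²` is nonincreasing; and
`S ≥ m / (‖S‖ + 1)` there (as `S² = H ≥ m` and `S² ≤ ‖S‖ S`), so `u t → 0`. Hence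
`⟪K φ, φ⟫ ≥ κ ‖φ‖²`. This is a pointwise form of `K = ∫₀^∞ e^{-tS} (S K + K S) e^{-tS} dt`,
used in place of the resolvent integral for `H^{-1/2}`.
-/

open Filter Topology
open scoped InnerProductSpace

lemma smul_commutator_mul_self {𝕜 R : Type*} [CommRing 𝕜] [Ring R] [Algebra 𝕜 R] (c : 𝕜)
    (s a : R) :
    c • (s * s * a - a * (s * s)) = s * (c • (s * a - a * s)) + c • (s * a - a * s) * s := by
  rw [mul_smul_comm, smul_mul_assoc, ← smul_add]
  congr 1
  noncomm_ring

lemma CStarAlgebra.mul_self_le_norm_smul_self {A : Type*} [NonUnitalCStarAlgebra A]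
    [PartialOrder A] [StarOrderedRing A] {a : A} (ha : 0 ≤ a) : a * a ≤ ‖a‖ • a := by
  have hr : star (CFC.sqrt a) = CFC.sqrt a := (CFC.sqrt_nonneg a).isSelfAdjoint.star_eq
  have h := CFC.sqrt_mul_sqrt_self a
  calc a * a = star (CFC.sqrt a) * (CFC.sqrt a * CFC.sqrt a) * CFC.sqrt a := by
        conv_lhs => rw [← h]
        rw [hr]
        noncomm_ring
    _ = star (CFC.sqrt a) * a * CFC.sqrt a := by rw [h]
    _ ≤ ‖a‖ • (star (CFC.sqrt a) * CFC.sqrt a) := CStarAlgebra.star_left_conjugate_le_norm_smul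
    _ = ‖a‖ • a := by rw [hr, h]

section Operators

variable {E : Type*} [NormedAddCommGroup E] [InnerProductSpace ℂ E] [CompleteSpace E]

lemma IsSelfAdjoint.inner_mul_mul_apply_self {P : E →L[ℂ] E} (hP : IsSelfAdjoint P)
    (B : E →L[ℂ] E) (x : E) : ⟪(P * B * P) x, x⟫_ℂ = ⟪B (P x), P x⟫_ℂ :=
  hP.isSymmetric _ _

lemma IsSelfAdjoint.re_inner_le_sqrt_mul_norm_sq {S : E →L[ℂ] E} (hS : IsSelfAdjoint S)
    {M : ℝ} {x : E} (hx : (⟪(S * S) x, x⟫_ℂ).re ≤ M * ‖x‖ ^ 2) :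
    (⟪S x, x⟫_ℂ).re ≤ √M * ‖x‖ ^ 2 := by
  have hnorm : ‖S x‖ ≤ √M * ‖x‖ := by
    have h := S.apply_norm_sq_eq_inner_adjoint_left x
    rw [hS.adjoint_eq] at h
    simpa only [Real.sqrt_sq (norm_nonneg _), Real.sqrt_mul' _ (sq_nonneg _)] using
      Real.sqrt_le_sqrt (h.trans_le hx)
  calc (⟪S x, x⟫_ℂ).re ≤ ‖S x‖ * ‖x‖ := (Complex.re_le_norm _).trans (norm_inner_le_norm _ _)
    _ ≤ √M * ‖x‖ * ‖x‖ := by gcongr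
    _ = √M * ‖x‖ ^ 2 := by ring

lemma ContinuousLinearMap.div_norm_add_one_mul_norm_sq_le_re_inner {S : E →L[ℂ] E} (hS : 0 ≤ S)
    {m : ℝ} {x : E} (hx : m * ‖x‖ ^ 2 ≤ (⟪(S * S) x, x⟫_ℂ).re) :
    m / (‖S‖ + 1) * ‖x‖ ^ 2 ≤ (⟪S x, x⟫_ℂ).re := by
  have hSS : (⟪(S * S) x, x⟫_ℂ).re ≤ ‖S‖ * (⟪S x, x⟫_ℂ).re := by
    have h := ((S * S).le_def (‖S‖ • S)).mp (CStarAlgebra.mul_self_le_norm_smul_self hS)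
    have := h.re_inner_nonneg_left x
    simp only [sub_apply, smul_apply, mul_apply_eq_comp, inner_sub_left, RCLike.re_to_complex,
      Complex.sub_re, sub_nonneg] at this
    rwa [← Complex.coe_smul, inner_smul_left, Complex.conj_ofReal, Complex.re_ofReal_mul] at this
  have hS_nonneg : 0 ≤ (⟪S x, x⟫_ℂ).re :=
    ((S.nonneg_iff_isPositive).mp hS).re_inner_nonneg_left x
  rw [div_mul_eq_mul_div, div_le_iff₀ (by positivity)]
  nlinarith

lemma hasDerivAt_exp_smul_neg_apply (S : E →L[ℂ] E) (φ : E) (t : ℝ) :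
    HasDerivAt (fun s : ℝ => NormedSpace.exp (s • -S) φ)
      (-S (NormedSpace.exp (t • -S) φ)) t :=
  ((ContinuousLinearMap.apply ℂ E φ).restrictScalars ℝ).hasFDerivAt.comp_hasDerivAt t
    (hasDerivAt_exp_smul_const' (-S) t)

lemma HasDerivAt.re_inner_apply_self {S : E →L[ℂ] E} {u : ℝ → E} {t : ℝ}
    (hu : HasDerivAt u (-S (u t)) t) (hS : IsSelfAdjoint S) (B : E →L[ℂ] E) :
    HasDerivAt (fun s => (⟪B (u s), u s⟫_ℂ).re)
      (-(⟪(S * B + B * S) (u t), u t⟫_ℂ).re) t := by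
  have h := ((B.restrictScalars ℝ).hasFDerivAt.comp_hasDerivAt t hu).inner ℂ hu
  refine (Complex.reCLM.hasFDerivAt.comp_hasDerivAt t h).congr_deriv ?_
  have hSB : ⟪B (u t), S (u t)⟫_ℂ = ⟪S (B (u t)), u t⟫_ℂ :=
    (hS.isSymmetric _ _).symm
  simp only [ContinuousLinearMap.coe_restrictScalars', Function.comp_apply, inner_neg_right, hSB,
    map_neg, inner_neg_left, Complex.reCLM_apply, Complex.add_re, Complex.neg_re, add_apply,
    mul_apply_eq_comp, inner_add_left]
  ring

lemma HasDerivAt.norm_sq_of_neg_apply {S : E →L[ℂ] E} {u : ℝ → E} {t : ℝ}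
    (hu : HasDerivAt u (-S (u t)) t) (hS : IsSelfAdjoint S) :
    HasDerivAt (fun s => ‖u s‖ ^ 2) (-2 * (⟪S (u t), u t⟫_ℂ).re) t := by
  convert hu.re_inner_apply_self hS 1 using 1
  · simp only [one_apply_eq_self, ← inner_self_eq_norm_sq (𝕜 := ℂ), RCLike.re_to_complex]
  · simp only [mul_one, one_mul, add_apply, inner_add_left, Complex.add_re]
    ring

lemma Commute.exp_smul_apply_eq_self {S P : E →L[ℂ] E} (hSP : Commute S P) {φ : E}
    (hφ : P φ = φ) (t : ℝ) : P (NormedSpace.exp (t • S) φ) = NormedSpace.exp (t • S) φ := by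
  rw [← mul_apply_eq_comp, ← ((hSP.smul_left t).exp_left).eq, mul_apply_eq_comp, hφ]

variable {S P : E →L[ℂ] E} {δ : ℝ}

lemma tendsto_exp_smul_neg_apply_atTop_zero (hS : IsSelfAdjoint S) (hSP : Commute S P)
    (hS_lower : ∀ x, P x = x → δ * ‖x‖ ^ 2 ≤ (⟪S x, x⟫_ℂ).re) (hδ : 0 < δ)
    {φ : E} (hφ : P φ = φ) :
    Tendsto (fun t : ℝ => NormedSpace.exp (t • -S) φ) atTop (𝓝 0) := by
  set u := fun t : ℝ => NormedSpace.exp (t • -S) φ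
  have hPu : ∀ t, P (u t) = u t := hSP.neg_left.exp_smul_apply_eq_self hφ
  have hanti : Antitone fun t => Real.exp (2 * δ * t) * ‖u t‖ ^ 2 := by
    refine antitone_of_hasDerivAt_nonpos (fun t => ((hasDerivAt_id t).const_mul (2 * δ)).exp.mul
      ((hasDerivAt_exp_smul_neg_apply S φ t).norm_sq_of_neg_apply hS)) fun t => ?_
    have := hS_lower (u t) (hPu t)
    have := Real.exp_pos (2 * δ * t)
    simp only [id, Pi.zero_apply]
    nlinarith
  have hdecay : ∀ᶠ t in atTop, ‖u t‖ ^ 2 ≤ ‖φ‖ ^ 2 * Real.exp (-(2 * δ * t)) := by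
    filter_upwards [eventually_ge_atTop 0] with t ht
    have h := hanti ht
    simp only [u, mul_zero, zero_smul, NormedSpace.exp_zero, Real.exp_zero, one_mul,
      one_apply_eq_self] at h
    calc ‖u t‖ ^ 2 = Real.exp (-(2 * δ * t)) * (Real.exp (2 * δ * t) * ‖u t‖ ^ 2) := by
          rw [← mul_assoc, ← Real.exp_add, neg_add_cancel, Real.exp_zero, one_mul]
      _ ≤ ‖φ‖ ^ 2 * Real.exp (-(2 * δ * t)) := by
          rw [mul_comm]
          exact mul_le_mul_of_nonneg_right h (Real.exp_pos _).le
  have hexp : Tendsto (fun t : ℝ => ‖φ‖ ^ 2 * Real.exp (-(2 * δ * t))) atTop (𝓝 0) := by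
    simpa using (Real.tendsto_exp_neg_atTop_nhds_zero.comp
      (tendsto_id.const_mul_atTop (by positivity : 0 < 2 * δ))).const_mul (‖φ‖ ^ 2)
  have hnorm := (squeeze_zero' (.of_forall fun t => by positivity) hdecay hexp).sqrt
  simp only [Real.sqrt_sq (norm_nonneg _), Real.sqrt_zero] at hnorm
  exact tendsto_zero_iff_norm_tendsto_zero.mpr hnorm

theorem mul_norm_sq_le_re_inner_of_anticommutator (hS : IsSelfAdjoint S) (hSP : Commute S P)
    (hS_lower : ∀ x, P x = x → δ * ‖x‖ ^ 2 ≤ (⟪S x, x⟫_ℂ).re) (hδ : 0 < δ)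
    {K : E →L[ℂ] E} {κ : ℝ}
    (hK : ∀ x, P x = x →
      2 * κ * (⟪S x, x⟫_ℂ).re ≤ (⟪(S * K + K * S) x, x⟫_ℂ).re)
    {φ : E} (hφ : P φ = φ) : κ * ‖φ‖ ^ 2 ≤ (⟪K φ, φ⟫_ℂ).re := by
  set u := fun t : ℝ => NormedSpace.exp (t • -S) φ
  have hu := hasDerivAt_exp_smul_neg_apply S φ
  have hPu : ∀ t, P (u t) = u t := hSP.neg_left.exp_smul_apply_eq_self hφ
  set Z : E → ℝ := fun x => (⟪K x, x⟫_ℂ).re - κ * ‖x‖ ^ 2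
  have hZ_anti : Antitone (Z ∘ u) :=
    antitone_of_hasDerivAt_nonpos (fun t => ((hu t).re_inner_apply_self hS K).sub
      (((hu t).norm_sq_of_neg_apply hS).const_mul κ)) fun t => by
        have := hK (u t) (hPu t)
        simp only [Pi.zero_apply]
        linarith
  have hZ_lim : Tendsto (Z ∘ u) atTop (𝓝 0) := by
    have hZ : Continuous Z := by fun_prop
    convert (hZ.tendsto 0).comp
      (tendsto_exp_smul_neg_apply_atTop_zero hS hSP hS_lower hδ hφ) using 2
    simp [Z]
  have h := hZ_anti.le_of_tendsto hZ_lim 0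
  simp only [Function.comp_apply, u, Z, zero_smul, NormedSpace.exp_zero, one_apply_eq_self] at h
  linarith

end Operators

theorem stmt12_general {𝓗 : Type*} [NormedAddCommGroup 𝓗] [InnerProductSpace ℂ 𝓗]
    [CompleteSpace 𝓗] (hbar c₀ m M : ℝ) (hh : 0 < hbar) (hc : 0 < c₀)
    (hm : 0 < m) (hmM : m ≤ M)
    (H A P : 𝓗 →L[ℂ] 𝓗) (hHsa : IsSelfAdjoint H)
    (hHpos : ∀ ψ : 𝓗, 0 ≤ (inner ℂ (H ψ) ψ : ℂ).re)
    (hPsa : IsSelfAdjoint P) (hPproj : P * P = P) (hcomm : H * P = P * H)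
    (hlow : ∀ ψ : 𝓗, m * ‖P ψ‖ ^ 2 ≤ (inner ℂ (H (P ψ)) (P ψ) : ℂ).re)
    (hhigh : ∀ ψ : 𝓗, (inner ℂ (H (P ψ)) (P ψ) : ℂ).re ≤ M * ‖P ψ‖ ^ 2)
    (hmourre : ∀ ψ : 𝓗, c₀ * hbar * ‖P ψ‖ ^ 2 ≤
      (inner ℂ ((P * ((Complex.I / (hbar : ℂ)) • (H * A - A * H)) * P) ψ) ψ : ℂ).re) :
    ∃ c₁ > 0, ∀ ψ : 𝓗, c₁ * hbar * ‖P ψ‖ ^ 2 ≤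
      (inner ℂ ((P * ((Complex.I / (hbar : ℂ)) •
        (cfc Real.sqrt H * A - A * cfc Real.sqrt H)) * P) ψ) ψ : ℂ).re := by
  have hH : 0 ≤ H := (H.nonneg_iff_isPositive).mpr
    (ContinuousLinearMap.isPositive_def'.mpr ⟨hHsa, hHpos⟩)
  have hSP : Commute (CFC.sqrt H) P := by
    rw [CFC.sqrt_eq_real_sqrt H, cfcₙ_eq_cfc]
    exact Commute.cfc_real hcomm Real.sqrt
  rw [← cfcₙ_eq_cfc, ← CFC.sqrt_eq_real_sqrt H]
  set S := CFC.sqrt H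
  have hS : 0 ≤ S := CFC.sqrt_nonneg H
  have hSS : S * S = H := CFC.sqrt_mul_sqrt_self H
  have hM : 0 < M := hm.trans_le hmM
  refine ⟨c₀ / (2 * √M), by positivity, fun ψ => ?_⟩
  rw [hPsa.inner_mul_mul_apply_self]
  have hS_lower : ∀ x, P x = x → m / (‖S‖ + 1) * ‖x‖ ^ 2 ≤ (⟪S x, x⟫_ℂ).re :=
    fun x hx => ContinuousLinearMap.div_norm_add_one_mul_norm_sq_le_re_inner hS
      (by simpa only [hSS, hx] using hlow x)
  refine mul_norm_sq_le_re_inner_of_anticommutator hS.isSelfAdjoint hSP hS_lower (by positivity)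
    (fun x hx => ?_) (by rw [← mul_apply_eq_comp, hPproj])
  have hT := hmourre x
  rw [hPsa.inner_mul_mul_apply_self, hx, ← hSS, smul_commutator_mul_self] at hT
  calc 2 * (c₀ / (2 * √M) * hbar) * (⟪S x, x⟫_ℂ).re
      ≤ 2 * (c₀ / (2 * √M) * hbar) * (√M * ‖x‖ ^ 2) := by
        gcongr
        refine hS.isSelfAdjoint.re_inner_le_sqrt_mul_norm_sq ?_
        simpa only [hSS, hx] using hhigh x
    _ = c₀ * hbar * ‖x‖ ^ 2 := by field_simp
    _ ≤ _ := hT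

/-- Mourre estimate for `√H` from the one for `H` (Kato square root): if `H ≥ 0`
is selfadjoint, `P = χ_I(H)` is a spectral projection commuting with `H` on
which `m ≤ H ≤ M` with `0 < m` (i.e. `I ⊂ (0,∞)` compact), and
`P (i/ℏ)[H,A] P ≥ c₀ℏ P`, then `P (i/ℏ)[√H,A] P ≥ c̃₀ℏ P` for some `c̃₀ > 0`. -/
theorem stmt12 {𝓗 : Type*} [NormedAddCommGroup 𝓗] [InnerProductSpace ℂ 𝓗]
    [CompleteSpace 𝓗] (hbar c₀ m M : ℝ) (hh : 0 < hbar) (hc : 0 < c₀)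
    (hm : 0 < m) (hmM : m ≤ M)
    (H A P : 𝓗 →L[ℂ] 𝓗) (hHsa : IsSelfAdjoint H) (hAsa : IsSelfAdjoint A)
    (hHpos : ∀ ψ : 𝓗, 0 ≤ (inner ℂ (H ψ) ψ : ℂ).re)
    (hPsa : IsSelfAdjoint P) (hPproj : P * P = P) (hcomm : H * P = P * H)
    (hlow : ∀ ψ : 𝓗, m * ‖P ψ‖ ^ 2 ≤ (inner ℂ (H (P ψ)) (P ψ) : ℂ).re)
    (hhigh : ∀ ψ : 𝓗, (inner ℂ (H (P ψ)) (P ψ) : ℂ).re ≤ M * ‖P ψ‖ ^ 2)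
    (hmourre : ∀ ψ : 𝓗, c₀ * hbar * ‖P ψ‖ ^ 2 ≤
      (inner ℂ ((P * ((Complex.I / (hbar : ℂ)) • (H * A - A * H)) * P) ψ) ψ : ℂ).re) :
    ∃ c₁ > 0, ∀ ψ : 𝓗, c₁ * hbar * ‖P ψ‖ ^ 2 ≤
      (inner ℂ ((P * ((Complex.I / (hbar : ℂ)) •
        (cfc Real.sqrt H * A - A * cfc Real.sqrt H)) * P) ψ) ψ : ℂ).re :=
  stmt12_general hbar c₀ m M hh hc hm hmM H A P hHsa hHpos hPsa hPproj hcomm hlow hhigh hmourre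
end

section
/- Let V₂ : [0,∞) → ℂ be continuous with |V₂(y)| ≤ C⟨y⟩^{-4}, let ℏ, E > 0, and let k(x,y) := 1 - exp((i/ℏ)∫_x^y √(Q(u)) du) with |k| ≤ 2, where Q is continuous and positive. Then the Volterra equation a(x) = ∫_x^∞ k(x,y) V₂(y)(1 + ℏ a(y)) dy has a unique bounded continuous solution on [0,∞) for ℏ small, satisfying |a(x)| ≤ C' ⟨x⟩^{-3} for all x ≥ 0, with C' independent of ℏ and E. -/
/-!
The phase `∫_x^y √Q` is real, so the kernel `k(x, y) = 1 - e^{i(Φ(y) - Φ(x))/ℏ}`, with `Φ` a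
primitive of `√Q`, has modulus at most `2`. Hence the right-hand side `T a` of the equation maps
bounded continuous functions to themselves and is a contraction with constant
`2Cℏ ∫_0^∞ ⟨y⟩⁻⁴ ≤ 2Cℏ ≤ 1/2` once `ℏ ≤ 1/(4C)`. Banach's fixed point theorem gives existence
and uniqueness, together with `‖a‖_∞ ≤ 4C`; the decay then follows from
`|a(x)| ≤ 2C(1 + ℏ‖a‖_∞) ∫_x^∞ ⟨y⟩⁻⁴` and `∫_x^∞ ⟨y⟩⁻⁴ ≤ ((1 + x)⟨x⟩²)⁻¹ ≤ ⟨x⟩⁻³`.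
-/

open MeasureTheory Set Filter Complex BoundedContinuousFunction

noncomputable section

lemma integrable_inv_one_add_sq_sq : Integrable fun y : ℝ => ((1 + y ^ 2) ^ 2)⁻¹ := by
  refine integrable_inv_one_add_sq.mono' (by fun_prop) (ae_of_all _ fun y => ?_)
  have h : 1 + y ^ 2 ≤ (1 + y ^ 2) ^ 2 := by nlinarith [sq_nonneg y]
  rw [Real.norm_of_nonneg (by positivity)]
  exact inv_anti₀ (by positivity) h

/-- `-((1 + y) (1 + y²))⁻¹` is a primitive of a majorant of `⟨y⟩⁻⁴` on `(-1, ∞)`. -/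
lemma integral_Ici_inv_one_add_sq_sq_le {x : ℝ} (hx : -1 < x) :
    ∫ y in Ici x, ((1 + y ^ 2) ^ 2)⁻¹ ≤ ((1 + x) * (1 + x ^ 2))⁻¹ := by
  set g' : ℝ → ℝ := fun y => (1 + 2 * y + 3 * y ^ 2) / ((1 + y) * (1 + y ^ 2)) ^ 2
  have hderiv : ∀ y ∈ Ici x, HasDerivAt (fun y => -((1 + y) * (1 + y ^ 2))⁻¹) (g' y) y := by
    intro y hy
    have hy : (1 + y) * (1 + y ^ 2) ≠ 0 := by
      have : 0 < 1 + y := by linarith [show x ≤ y from hy]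
      positivity
    have hp : HasDerivAt (fun y => (1 + y) * (1 + y ^ 2)) (1 + 2 * y + 3 * y ^ 2) y :=
      (((hasDerivAt_id' y).const_add 1).fun_mul ((hasDerivAt_pow 2 y).const_add 1)).congr_deriv
        (by push_cast; ring)
    exact (hp.fun_inv hy).fun_neg.congr_deriv (by ring)
  have hg'_nonneg : ∀ y ∈ Ioi x, 0 ≤ g' y := fun y _ => by
    have : 0 ≤ 1 + 2 * y + 3 * y ^ 2 := by nlinarith [sq_nonneg (1 + 3 * y)]
    positivity
  have hlim : Tendsto (fun y : ℝ => -((1 + y) * (1 + y ^ 2))⁻¹) atTop (nhds 0) := by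
    have : Tendsto (fun y : ℝ => (1 + y) * (1 + y ^ 2)) atTop atTop :=
      (tendsto_atTop_add_const_left _ _ tendsto_id).atTop_mul_atTop₀
        (tendsto_atTop_add_const_left _ _ (tendsto_pow_atTop two_ne_zero))
    simpa using this.inv_tendsto_atTop.neg
  calc ∫ y in Ici x, ((1 + y ^ 2) ^ 2)⁻¹ ≤ ∫ y in Ioi x, g' y := by
        rw [integral_Ici_eq_integral_Ioi]
        refine setIntegral_mono_on integrable_inv_one_add_sq_sq.integrableOn
          (integrableOn_Ioi_deriv_of_nonneg' hderiv hg'_nonneg hlim) measurableSet_Ioi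
          fun y hy => ?_
        have h1 : 0 < 1 + y := by linarith [show x < y from hy]
        simp only [g']
        rw [mul_pow, ← div_div, le_div_iff₀ (by positivity), inv_mul_eq_div,
          div_le_div_iff₀ (by positivity) (by positivity)]
        nlinarith [sq_nonneg y]
    _ = ((1 + x) * (1 + x ^ 2))⁻¹ := by
        rw [integral_Ioi_of_hasDerivAt_of_nonneg' hderiv hg'_nonneg hlim]; ring

lemma inv_one_add_mul_one_add_sq_le_rpow {x : ℝ} (hx : 0 ≤ x) :
    ((1 + x) * (1 + x ^ 2))⁻¹ ≤ (1 + x ^ 2) ^ (-(3 : ℝ) / 2) := by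
  have hpos : 0 < 1 + x ^ 2 := by positivity
  have hsqrt : √(1 + x ^ 2) ≤ 1 + x := Real.sqrt_le_iff.2 ⟨by positivity, by nlinarith⟩
  rw [show -(3 : ℝ) / 2 = -(1 + 1 / 2) by norm_num, Real.rpow_neg hpos.le,
    Real.rpow_add hpos, Real.rpow_one, ← Real.sqrt_eq_rpow, mul_comm]
  exact inv_anti₀ (by positivity) (mul_le_mul_of_nonneg_left hsqrt hpos.le)

lemma integral_Ici_inv_one_add_sq_sq_le_rpow {x : ℝ} (hx : 0 ≤ x) :
    ∫ y in Ici x, ((1 + y ^ 2) ^ 2)⁻¹ ≤ (1 + x ^ 2) ^ (-(3 : ℝ) / 2) :=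
  (integral_Ici_inv_one_add_sq_sq_le (by linarith)).trans
    (inv_one_add_mul_one_add_sq_le_rpow hx)

lemma integral_Ici_inv_one_add_sq_sq_le_one {x : ℝ} (hx : 0 ≤ x) :
    ∫ y in Ici x, ((1 + y ^ 2) ^ 2)⁻¹ ≤ 1 :=
  (integral_Ici_inv_one_add_sq_sq_le_rpow hx).trans
    (Real.rpow_le_one_of_one_le_of_nonpos (by nlinarith) (by norm_num))

def volterraKernel (ℏ : ℝ) (φ : ℝ → ℝ) (x y : ℝ) : ℂ :=
  1 - exp (I / ℏ * ((φ y - φ x : ℝ) : ℂ))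

lemma norm_exp_I_div_mul_ofReal (ℏ r : ℝ) : ‖exp (I / ℏ * r)‖ = 1 := by
  rw [show I / ℏ * r = I * ((r / ℏ : ℝ) : ℂ) by push_cast; ring]
  exact norm_exp_I_mul_ofReal _

namespace volterraKernel

variable {ℏ : ℝ} {φ : ℝ → ℝ} {g : ℝ → ℂ}

lemma norm_le (x y : ℝ) : ‖volterraKernel ℏ φ x y‖ ≤ 2 :=
  (norm_sub_le _ _).trans (by rw [norm_one, norm_exp_I_div_mul_ofReal]; norm_num)

lemma norm_setIntegral_Ici_mul_le {w : ℝ → ℝ} {t : ℝ} (hw : IntegrableOn w (Ici t))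
    (hgw : ∀ y ∈ Ici t, ‖g y‖ ≤ w y) (x : ℝ) :
    ‖∫ y in Ici t, volterraKernel ℏ φ x y * g y‖ ≤ 2 * ∫ y in Ici t, w y := by
  rw [← integral_const_mul]
  refine norm_integral_le_of_norm_le (hw.const_mul 2) (ae_restrict_of_forall_mem measurableSet_Ici
    fun y hy => ?_)
  rw [norm_mul]
  exact mul_le_mul (norm_le x y) (hgw y hy) (norm_nonneg _) zero_le_two

lemma integrableOn_Ici_mul {a : ℝ} (hφ : ContinuousOn φ (Ici a)) (hg : IntegrableOn g (Ici a))
    (x : ℝ) : IntegrableOn (fun y => volterraKernel ℏ φ x y * g y) (Ici a) := by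
  have hk : ContinuousOn (volterraKernel ℏ φ x) (Ici a) := by unfold volterraKernel; fun_prop
  exact hg.bdd_mul (hk.aestronglyMeasurable measurableSet_Ici) (ae_of_all _ (norm_le x))

/-- The kernel factorises as `1 - e(x)⁻¹ e(y)`, which reduces continuity in `x` to that of tail
integrals. -/
lemma continuousOn_setIntegral_Ici_mul {a : ℝ} (hφ : ContinuousOn φ (Ici a))
    (hg : IntegrableOn g (Ici a)) :
    ContinuousOn (fun x => ∫ y in Ici x, volterraKernel ℏ φ x y * g y) (Ici a) := by
  have he : ContinuousOn (fun y => exp (I / ℏ * φ y)) (Ici a) := by fun_prop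
  have heg : IntegrableOn (fun y => exp (I / ℏ * φ y) * g y) (Ici a) :=
    hg.bdd_mul (he.aestronglyMeasurable measurableSet_Ici)
      (ae_of_all _ fun y => (norm_exp_I_div_mul_ofReal ℏ (φ y)).le)
  refine (hg.continuousOn_Ici_primitive_Ici.sub ((by fun_prop :
      ContinuousOn (fun x => exp (-(I / ℏ) * φ x)) (Ici a)).mul
        heg.continuousOn_Ici_primitive_Ici)).congr fun x hx => ?_
  have hsub : Ici x ⊆ Ici a := Ici_subset_Ici.2 hx
  have hker : ∀ y, volterraKernel ℏ φ x y * g y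
      = g y - exp (-(I / ℏ) * φ x) * (exp (I / ℏ * φ y) * g y) := fun y => by
    rw [volterraKernel, sub_mul, one_mul, ← mul_assoc, ← Complex.exp_add]
    congr 3
    push_cast; ring
  simp only [hker]
  rw [integral_sub (hg.mono_set hsub) ((heg.mono_set hsub).const_mul _), integral_const_mul]
  rfl

end volterraKernel

def wkbPhase (Q : ℝ → ℝ) (x : ℝ) : ℝ :=
  ∫ u in 0..x, √(Q (max u 0))

section wkbPhase

variable {Q : ℝ → ℝ}

lemma continuous_wkbPhase (hQ : ContinuousOn Q (Ici 0)) : Continuous (wkbPhase Q) :=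
  intervalIntegral.continuous_primitive (fun _ _ => Continuous.intervalIntegrable
    (Real.continuous_sqrt.comp (hQ.comp_continuous (by fun_prop) fun u => le_max_right u 0)) _ _) 0

lemma wkbPhase_sub_wkbPhase (hQ : ContinuousOn Q (Ici 0)) {x y : ℝ} (hx : 0 ≤ x) (hy : 0 ≤ y) :
    wkbPhase Q y - wkbPhase Q x = ∫ u in x..y, √(Q u) := by
  have hcont : Continuous fun u => √(Q (max u 0)) :=
    Real.continuous_sqrt.comp (hQ.comp_continuous (by fun_prop) fun u => le_max_right u 0)
  rw [wkbPhase, wkbPhase, intervalIntegral.integral_interval_sub_left (hcont.intervalIntegrable _ _)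
    (hcont.intervalIntegrable _ _)]
  refine intervalIntegral.integral_congr fun u hu => ?_
  have : 0 ≤ u := le_trans (le_min hx hy) hu.1
  simp only [max_eq_left this]

end wkbPhase

/-- The right-hand side of the Volterra equation, read at `max x 0` so that it is defined and
continuous on all of `ℝ`. -/
def volterraOp (ℏ : ℝ) (φ : ℝ → ℝ) (V f : ℝ → ℂ) (x : ℝ) : ℂ :=
  ∫ y in Ici (max x 0), volterraKernel ℏ φ (max x 0) y * (V y * (1 + ℏ * f y))

section volterraOp

variable {ℏ C M : ℝ} {φ : ℝ → ℝ} {V f g : ℝ → ℂ}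

lemma norm_mul_one_add_mul_le (hVC : ∀ y ∈ Ici (0 : ℝ), ‖V y‖ ≤ C * ((1 + y ^ 2) ^ 2)⁻¹)
    (hℏ : 0 ≤ ℏ) (hfM : ∀ y, ‖f y‖ ≤ M) :
    ∀ y ∈ Ici (0 : ℝ), ‖V y * (1 + ℏ * f y)‖ ≤ C * (1 + ℏ * M) * ((1 + y ^ 2) ^ 2)⁻¹ := by
  intro y hy
  have hf : ‖1 + (ℏ : ℂ) * f y‖ ≤ 1 + ℏ * M := by
    refine (norm_add_le _ _).trans ?_
    rw [norm_one, norm_mul, Complex.norm_of_nonneg hℏ]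
    gcongr
    exact hfM y
  calc ‖V y * (1 + ℏ * f y)‖ ≤ C * ((1 + y ^ 2) ^ 2)⁻¹ * (1 + ℏ * M) := by
        rw [norm_mul]
        exact mul_le_mul (hVC y hy) hf (norm_nonneg _) ((norm_nonneg _).trans (hVC y hy))
    _ = C * (1 + ℏ * M) * ((1 + y ^ 2) ^ 2)⁻¹ := by ring

lemma integrableOn_mul_one_add_mul (hV : ContinuousOn V (Ici 0))
    (hVC : ∀ y ∈ Ici (0 : ℝ), ‖V y‖ ≤ C * ((1 + y ^ 2) ^ 2)⁻¹) (hℏ : 0 ≤ ℏ) (hf : Continuous f)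
    (hfM : ∀ y, ‖f y‖ ≤ M) : IntegrableOn (fun y => V y * (1 + ℏ * f y)) (Ici 0) :=
  ((integrable_inv_one_add_sq_sq.const_mul _).integrableOn).mono'
    ((hV.mul (by fun_prop)).aestronglyMeasurable measurableSet_Ici)
    (ae_restrict_of_forall_mem measurableSet_Ici (norm_mul_one_add_mul_le hVC hℏ hfM))

lemma norm_volterraOp_le (hVC : ∀ y ∈ Ici (0 : ℝ), ‖V y‖ ≤ C * ((1 + y ^ 2) ^ 2)⁻¹)
    (hℏ : 0 ≤ ℏ) (hfM : ∀ y, ‖f y‖ ≤ M) (x : ℝ) :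
    ‖volterraOp ℏ φ V f x‖ ≤ 2 * (C * (1 + ℏ * M)) * ∫ y in Ici (max x 0), ((1 + y ^ 2) ^ 2)⁻¹ := by
  rw [mul_assoc, ← integral_const_mul]
  exact volterraKernel.norm_setIntegral_Ici_mul_le
    (integrable_inv_one_add_sq_sq.const_mul _).integrableOn
    (fun y hy => norm_mul_one_add_mul_le hVC hℏ hfM y (le_trans (le_max_right x 0) hy)) _

lemma continuous_volterraOp (hφ : ContinuousOn φ (Ici 0)) (hV : ContinuousOn V (Ici 0))
    (hVC : ∀ y ∈ Ici (0 : ℝ), ‖V y‖ ≤ C * ((1 + y ^ 2) ^ 2)⁻¹) (hℏ : 0 ≤ ℏ) (hf : Continuous f)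
    (hfM : ∀ y, ‖f y‖ ≤ M) : Continuous (volterraOp ℏ φ V f) :=
  (volterraKernel.continuousOn_setIntegral_Ici_mul hφ
    (integrableOn_mul_one_add_mul hV hVC hℏ hf hfM)).comp_continuous (by fun_prop)
    fun x => le_max_right x 0

lemma volterraOp_congr (hfg : EqOn f g (Ici 0)) : volterraOp ℏ φ V f = volterraOp ℏ φ V g := by
  funext x
  refine setIntegral_congr_fun measurableSet_Ici fun y hy => ?_
  rw [hfg (le_trans (le_max_right x 0) hy)]

lemma volterraOp_max (x : ℝ) : volterraOp ℏ φ V f (max x 0) = volterraOp ℏ φ V f x := by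
  rw [volterraOp, volterraOp, max_eq_left (le_max_right x 0)]

lemma norm_volterraOp_sub_le (hφ : ContinuousOn φ (Ici 0)) (hV : ContinuousOn V (Ici 0))
    (hVC : ∀ y ∈ Ici (0 : ℝ), ‖V y‖ ≤ C * ((1 + y ^ 2) ^ 2)⁻¹) (hC : 0 ≤ C) (hℏ : 0 ≤ ℏ)
    (f g : ℝ →ᵇ ℂ) (x : ℝ) :
    ‖volterraOp ℏ φ V f x - volterraOp ℏ φ V g x‖ ≤ 2 * C * ℏ * dist f g := by
  have hsub : Ici (max x 0) ⊆ Ici 0 := Ici_subset_Ici.2 (le_max_right x 0)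
  have hint : ∀ h : ℝ →ᵇ ℂ, IntegrableOn
      (fun y => volterraKernel ℏ φ (max x 0) y * (V y * (1 + ℏ * h y))) (Ici (max x 0)) :=
    fun h => (volterraKernel.integrableOn_Ici_mul hφ (integrableOn_mul_one_add_mul hV hVC hℏ
      h.continuous h.norm_coe_le_norm) _).mono_set hsub
  have hdiff : ∀ y ∈ Ici (max x 0), ‖V y * (ℏ * (f y - g y))‖
      ≤ C * ℏ * dist f g * ((1 + y ^ 2) ^ 2)⁻¹ := by
    intro y hy
    have hVy := hVC y (hsub hy)
    rw [norm_mul, norm_mul, Complex.norm_of_nonneg hℏ, ← dist_eq_norm]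
    calc ‖V y‖ * (ℏ * dist (f y) (g y)) ≤ C * ((1 + y ^ 2) ^ 2)⁻¹ * (ℏ * dist f g) := by
          gcongr
          exact f.dist_coe_le_dist y
      _ = C * ℏ * dist f g * ((1 + y ^ 2) ^ 2)⁻¹ := by ring
  calc ‖volterraOp ℏ φ V f x - volterraOp ℏ φ V g x‖
      = ‖∫ y in Ici (max x 0), volterraKernel ℏ φ (max x 0) y * (V y * (ℏ * (f y - g y)))‖ := by
        rw [volterraOp, volterraOp, ← integral_sub (hint f) (hint g)]
        congr 2; funext y; ring
    _ ≤ 2 * ∫ y in Ici (max x 0), C * ℏ * dist f g * ((1 + y ^ 2) ^ 2)⁻¹ :=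
        volterraKernel.norm_setIntegral_Ici_mul_le
          (integrable_inv_one_add_sq_sq.const_mul _).integrableOn hdiff _
    _ = 2 * C * ℏ * dist f g * ∫ y in Ici (max x 0), ((1 + y ^ 2) ^ 2)⁻¹ := by
        rw [integral_const_mul]; ring
    _ ≤ 2 * C * ℏ * dist f g :=
        mul_le_of_le_one_right (by positivity)
          (integral_Ici_inv_one_add_sq_sq_le_one (le_max_right x 0))

end volterraOp

lemma volterraOp_wkbPhase {ℏ : ℝ} {Q : ℝ → ℝ} {V f : ℝ → ℂ} (hQ : ContinuousOn Q (Ici 0)) {x : ℝ}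
    (hx : 0 ≤ x) :
    volterraOp ℏ (wkbPhase Q) V f x = ∫ y in Ici x,
      (1 - exp (I / ℏ * ((∫ u in x..y, √(Q u) : ℝ) : ℂ))) * V y * (1 + ℏ * f y) := by
  rw [volterraOp, max_eq_left hx]
  refine setIntegral_congr_fun measurableSet_Ici fun y hy => ?_
  rw [volterraKernel, wkbPhase_sub_wkbPhase hQ hx (hx.trans hy), mul_assoc]

section volterraBCF

variable {ℏ C : ℝ} {φ : ℝ → ℝ} {V : ℝ → ℂ}

def volterraBCF (hφ : ContinuousOn φ (Ici 0)) (hV : ContinuousOn V (Ici 0))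
    (hVC : ∀ y ∈ Ici (0 : ℝ), ‖V y‖ ≤ C * ((1 + y ^ 2) ^ 2)⁻¹) (hC : 0 ≤ C) (hℏ : 0 ≤ ℏ)
    (f : ℝ →ᵇ ℂ) : ℝ →ᵇ ℂ :=
  ofNormedAddCommGroup (volterraOp ℏ φ V f)
    (continuous_volterraOp hφ hV hVC hℏ f.continuous f.norm_coe_le_norm) (2 * (C * (1 + ℏ * ‖f‖)))
    fun x => (norm_volterraOp_le hVC hℏ f.norm_coe_le_norm x).trans <|
      mul_le_of_le_one_right (by positivity)
        (integral_Ici_inv_one_add_sq_sq_le_one (le_max_right x 0))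

variable {hφ : ContinuousOn φ (Ici 0)} {hV : ContinuousOn V (Ici 0)}
  {hVC : ∀ y ∈ Ici (0 : ℝ), ‖V y‖ ≤ C * ((1 + y ^ 2) ^ 2)⁻¹} {hC : 0 ≤ C} {hℏ : 0 ≤ ℏ}

lemma contractingWith_volterraBCF (hsmall : 4 * C * ℏ ≤ 1) :
    ContractingWith (1 / 2) (volterraBCF hφ hV hVC hC hℏ) := by
  refine ⟨by rw [← NNReal.coe_lt_coe]; norm_num, LipschitzWith.of_dist_le_mul fun f g => ?_⟩
  rw [dist_le (by positivity)]
  intro x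
  rw [dist_eq_norm]
  refine (norm_volterraOp_sub_le hφ hV hVC hC hℏ f g x).trans ?_
  push_cast
  nlinarith [dist_nonneg (x := f) (y := g)]

lemma norm_apply_le_of_isFixedPt (hsmall : 4 * C * ℏ ≤ 1) {a : ℝ →ᵇ ℂ}
    (ha : Function.IsFixedPt (volterraBCF hφ hV hVC hC hℏ) a) {x : ℝ} (hx : 0 ≤ x) :
    ‖a x‖ ≤ 4 * C * (1 + x ^ 2) ^ (-(3 : ℝ) / 2) := by
  have hfix : ∀ x, a x = volterraOp ℏ φ V a x := fun x => (DFunLike.congr_fun ha x).symm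
  have hnorm : ‖a‖ ≤ 4 * C := by
    have : ‖a‖ ≤ 2 * (C * (1 + ℏ * ‖a‖)) := by
      conv_lhs => rw [← ha]
      exact norm_ofNormedAddCommGroup_le _ (by positivity) _
    nlinarith
  have hℏa : ℏ * ‖a‖ ≤ 1 := by nlinarith
  calc ‖a x‖ ≤ 2 * (C * (1 + ℏ * ‖a‖)) * ∫ y in Ici x, ((1 + y ^ 2) ^ 2)⁻¹ := by
        rw [hfix, ← max_eq_left hx, volterraOp_max]
        exact norm_volterraOp_le hVC hℏ a.norm_coe_le_norm x
    _ ≤ 4 * C * (1 + x ^ 2) ^ (-(3 : ℝ) / 2) := by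
        refine mul_le_mul (by nlinarith) (integral_Ici_inv_one_add_sq_sq_le_rpow hx)
          (setIntegral_nonneg measurableSet_Ici fun y _ => by positivity) (by positivity)

lemma eqOn_of_isFixedPt {K : NNReal} (hT : ContractingWith K (volterraBCF hφ hV hVC hC hℏ))
    {a : ℝ →ᵇ ℂ} (ha : Function.IsFixedPt (volterraBCF hφ hV hVC hC hℏ) a)
    {b : ℝ → ℂ} {M : ℝ} (hb : ContinuousOn b (Ici 0)) (hbM : ∀ x ∈ Ici (0 : ℝ), ‖b x‖ ≤ M)
    (hbeq : ∀ x ∈ Ici (0 : ℝ), b x = volterraOp ℏ φ V b x) : EqOn a b (Ici 0) := by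
  set b' : ℝ →ᵇ ℂ := ofNormedAddCommGroup (fun x => b (max x 0))
    (hb.comp_continuous (by fun_prop) fun x => le_max_right x 0) M
    fun x => hbM _ (le_max_right x 0)
  have hbb' : EqOn b' b (Ici 0) := fun x hx => congrArg b (max_eq_left hx)
  have hb' : Function.IsFixedPt (volterraBCF hφ hV hVC hC hℏ) b' := by
    ext x
    change volterraOp ℏ φ V b' x = b (max x 0)
    rw [← volterraOp_max, volterraOp_congr hbb', ← hbeq _ (le_max_right x 0)]
  intro x hx
  rw [hT.fixedPoint_unique' ha hb', hbb' hx]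

end volterraBCF

end

/-- Large-energy Volterra equation: with `|V₂(y)| ≤ C⟨y⟩⁻⁴`, `Q > 0` continuous
(so the phase is real and `|k(x,y)| ≤ 2` where
`k(x,y) = 1 - exp((i/ℏ)∫_x^y √Q)`), for `ℏ` small the equation
`a(x) = ∫_x^∞ k(x,y) V₂(y)(1 + ℏa(y)) dy` has a unique bounded continuous
solution on `[0,∞)`, and it satisfies `|a(x)| ≤ C'⟨x⟩⁻³` with `C'` independent
of `ℏ` and `E`. -/
theorem stmt19 (C : ℝ) (hC : 0 < C) :
    ∃ hbar₀ > 0, ∃ C' > 0, ∀ hbar E : ℝ, 0 < hbar → hbar ≤ hbar₀ → 0 < E →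
      ∀ (V₂ : ℝ → ℂ) (Q : ℝ → ℝ),
        ContinuousOn V₂ (Set.Ici 0) →
        (∀ y ∈ Set.Ici (0 : ℝ), ‖V₂ y‖ ≤ C * (1 + y ^ 2) ^ (-(2 : ℝ))) →
        ContinuousOn Q (Set.Ici 0) → (∀ u ∈ Set.Ici (0 : ℝ), 0 < Q u) →
        ∃ a : ℝ → ℂ,
          (ContinuousOn a (Set.Ici 0) ∧ (∃ M : ℝ, ∀ x ∈ Set.Ici (0 : ℝ), ‖a x‖ ≤ M) ∧
            ∀ x ∈ Set.Ici (0 : ℝ),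
              a x = ∫ y in Set.Ici x,
                (1 - Complex.exp (Complex.I / (hbar : ℂ) *
                    ((∫ u in x..y, Real.sqrt (Q u) : ℝ) : ℂ))) *
                  V₂ y * (1 + (hbar : ℂ) * a y)) ∧
          (∀ b : ℝ → ℂ,
            (ContinuousOn b (Set.Ici 0) ∧ (∃ M : ℝ, ∀ x ∈ Set.Ici (0 : ℝ), ‖b x‖ ≤ M) ∧
              ∀ x ∈ Set.Ici (0 : ℝ),
                b x = ∫ y in Set.Ici x,
                  (1 - Complex.exp (Complex.I / (hbar : ℂ) *
                      ((∫ u in x..y, Real.sqrt (Q u) : ℝ) : ℂ))) *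
                    V₂ y * (1 + (hbar : ℂ) * b y)) →
            Set.EqOn a b (Set.Ici 0)) ∧
          ∀ x ∈ Set.Ici (0 : ℝ), ‖a x‖ ≤ C' * (1 + x ^ 2) ^ (-(3 : ℝ) / 2) := by
  refine ⟨1 / (4 * C), by positivity, 4 * C, by positivity, ?_⟩
  intro hbar E hbar_pos hbar_le _ V₂ Q hV hVC hQ _
  have hVC' : ∀ y ∈ Ici (0 : ℝ), ‖V₂ y‖ ≤ C * ((1 + y ^ 2) ^ 2)⁻¹ := fun y hy => by
    simpa [Real.rpow_neg (by positivity : (0 : ℝ) ≤ 1 + y ^ 2)] using hVC y hy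
  have hsmall : 4 * C * hbar ≤ 1 := by
    rwa [le_div_iff₀ (by positivity), mul_comm] at hbar_le
  have hT := contractingWith_volterraBCF (hφ := (continuous_wkbPhase hQ).continuousOn) (hV := hV)
    (hVC := hVC') (hC := hC.le) (hℏ := hbar_pos.le) hsmall
  have ha := hT.fixedPoint_isFixedPt
  set a := hT.fixedPoint
  refine ⟨a, ⟨a.continuous.continuousOn, ⟨‖a‖, fun x _ => a.norm_coe_le_norm x⟩, fun x hx => ?_⟩,
    fun b ⟨hb, ⟨M, hbM⟩, hbeq⟩ => eqOn_of_isFixedPt hT ha hb hbM fun x hx => ?_,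
    fun x hx => norm_apply_le_of_isFixedPt hsmall ha hx⟩
  · rw [← volterraOp_wkbPhase hQ hx]
    exact (DFunLike.congr_fun ha x).symm
  · rw [volterraOp_wkbPhase hQ hx]
    exact hbeq x hx
end
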